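/- Let Ω ∈ S², h : [−1,1] → ℝ integrable, and M_Ω(ω) = Z⁻¹ e^{κ ω·Ω}. Then P_{Ω⊥} ∫_{S²} (ω⊗ω) h(ω·Ω) M_Ω(ω) dω P_{Ω⊥} = C₀ P_{Ω⊥}, where C₀ = (1/4)∫₀^π sin³θ h(cosθ) M̃(θ) dθ (with normalization ∫_{S²} dω = 1). -/
import Mathlib


open Real Matrix

/-- The orthogonal projection matrix `P_{x⊥} = Id - x ⊗ x`. -/
noncomputable def projMat (x : Fin 3 → ℝ) : Fin 3 → Fin 3 → ℝ :=
  fun i j => (if i = j then (1 : ℝ) else 0) - x i * x j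

/-- Matrix product of 3×3 matrices given as functions. -/
noncomputable def mm (A B : Fin 3 → Fin 3 → ℝ) : Fin 3 → Fin 3 → ℝ :=
  fun i j => ∑ k, A i k * B k j

/-- Parametrization of the unit sphere adapted to `Ω` via an orthonormal frame. -/
noncomputable def ωpar (Ω e₁ e₂ : Fin 3 → ℝ) (θ φ : ℝ) : Fin 3 → ℝ :=
  fun i => Real.sin θ * Real.cos φ * e₁ i + Real.sin θ * Real.sin φ * e₂ i + Real.cos θ * Ω i

/-- Normalizing constant of the von Mises density for the normalized sphere
measure `∫_{S²} dω = 1`: `Z = (1/2)∫₀^π e^{κcosθ} sinθ dθ`. -/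
noncomputable def Znorm (κ : ℝ) : ℝ :=
  (1/2) * ∫ θ in (0:ℝ)..π, Real.exp (κ * Real.cos θ) * Real.sin θ

/-- `C₀ = (1/4)∫₀^π sin³θ h(cosθ) M̃(θ) dθ` with `M̃(θ) = Z⁻¹ e^{κcosθ}`. -/
noncomputable def Czero (h : ℝ → ℝ) (κ : ℝ) : ℝ :=
  (1/4) * ∫ θ in (0:ℝ)..π,
    Real.sin θ ^ 3 * h (Real.cos θ) * (Real.exp (κ * Real.cos θ) / Znorm κ)

/-- Auxiliary: value of the double integral, for any continuous scalar weight. -/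
lemma aux_integral (c : ℝ → ℝ) (hccont : Continuous c) (Ω e₁ e₂ : Fin 3 → ℝ) :
    (∫ θ in (0:ℝ)..π, ∫ φ in (0:ℝ)..(2 * π),
      (c θ) • (fun i j => ωpar Ω e₁ e₂ θ φ i * ωpar Ω e₁ e₂ θ φ j : Fin 3 → Fin 3 → ℝ))
    = (π * ∫ θ in (0:ℝ)..π, c θ * Real.sin θ ^ 2) •
        (fun i j => e₁ i * e₁ j + e₂ i * e₂ j : Fin 3 → Fin 3 → ℝ)
      + (2 * π * ∫ θ in (0:ℝ)..π, c θ * Real.cos θ ^ 2) •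
        (fun i j => Ω i * Ω j : Fin 3 → Fin 3 → ℝ) := by
  set S : Fin 3 → Fin 3 → ℝ := fun i j => e₁ i * e₁ j + e₂ i * e₂ j with hS
  set T : Fin 3 → Fin 3 → ℝ := fun i j => Ω i * Ω j with hT
  set Mab : Fin 3 → Fin 3 → ℝ := fun i j => e₁ i * e₂ j + e₂ i * e₁ j with hMab
  set MaO : Fin 3 → Fin 3 → ℝ := fun i j => e₁ i * Ω j + Ω i * e₁ j with hMaO
  set MbO : Fin 3 → Fin 3 → ℝ := fun i j => e₂ i * Ω j + Ω i * e₂ j with hMbO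
  set Maa : Fin 3 → Fin 3 → ℝ := fun i j => e₁ i * e₁ j with hMaa
  set Mbb : Fin 3 → Fin 3 → ℝ := fun i j => e₂ i * e₂ j with hMbb
  have inner : ∀ θ : ℝ, (∫ φ in (0:ℝ)..(2*π),
      (c θ) • (fun i j => ωpar Ω e₁ e₂ θ φ i * ωpar Ω e₁ e₂ θ φ j : Fin 3 → Fin 3 → ℝ))
      = (π * (c θ * Real.sin θ ^ 2)) • S + (2 * π * (c θ * Real.cos θ ^ 2)) • T := by
    intro θ
    have hfun : (fun φ => (c θ) • (fun i j => ωpar Ω e₁ e₂ θ φ i * ωpar Ω e₁ e₂ θ φ j :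
        Fin 3 → Fin 3 → ℝ))
        = fun φ => (c θ * Real.sin θ ^ 2 * Real.cos φ ^ 2) • Maa
          + (c θ * Real.sin θ ^ 2 * Real.sin φ ^ 2) • Mbb
          + (c θ * Real.sin θ ^ 2 * (Real.sin φ * Real.cos φ)) • Mab
          + (c θ * (Real.sin θ * Real.cos θ) * Real.cos φ) • MaO
          + (c θ * (Real.sin θ * Real.cos θ) * Real.sin φ) • MbO
          + (c θ * Real.cos θ ^ 2) • T := by
      funext φ
      funext i j
      simp only [Pi.add_apply, Pi.smul_apply, smul_eq_mul, hMaa, hMbb, hMab, hMaO, hMbO, hT,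
        ωpar]
      ring
    rw [hfun]
    have I1 : IntervalIntegrable (fun φ => (c θ * Real.sin θ ^ 2 * Real.cos φ ^ 2) • Maa)
        MeasureTheory.volume 0 (2*π) :=
      ((continuous_const.mul (Real.continuous_cos.pow 2)).smul continuous_const).intervalIntegrable _ _
    have I2 : IntervalIntegrable (fun φ => (c θ * Real.sin θ ^ 2 * Real.sin φ ^ 2) • Mbb)
        MeasureTheory.volume 0 (2*π) :=
      ((continuous_const.mul (Real.continuous_sin.pow 2)).smul continuous_const).intervalIntegrable _ _
    have I3 : IntervalIntegrable (fun φ => (c θ * Real.sin θ ^ 2 * (Real.sin φ * Real.cos φ)) • Mab)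
        MeasureTheory.volume 0 (2*π) :=
      ((continuous_const.mul (Real.continuous_sin.mul Real.continuous_cos)).smul continuous_const).intervalIntegrable _ _
    have I4 : IntervalIntegrable (fun φ => (c θ * (Real.sin θ * Real.cos θ) * Real.cos φ) • MaO)
        MeasureTheory.volume 0 (2*π) :=
      ((continuous_const.mul Real.continuous_cos).smul continuous_const).intervalIntegrable _ _
    have I5 : IntervalIntegrable (fun φ => (c θ * (Real.sin θ * Real.cos θ) * Real.sin φ) • MbO)
        MeasureTheory.volume 0 (2*π) :=
      ((continuous_const.mul Real.continuous_sin).smul continuous_const).intervalIntegrable _ _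
    have I6 : IntervalIntegrable (fun φ => (c θ * Real.cos θ ^ 2) • T)
        MeasureTheory.volume 0 (2*π) := intervalIntegrable_const
    rw [intervalIntegral.integral_add ((((I1.add I2).add I3).add I4).add I5) I6,
        intervalIntegral.integral_add (((I1.add I2).add I3).add I4) I5,
        intervalIntegral.integral_add ((I1.add I2).add I3) I4,
        intervalIntegral.integral_add (I1.add I2) I3,
        intervalIntegral.integral_add I1 I2]
    have e1 : (∫ φ in (0:ℝ)..(2*π), (c θ * Real.sin θ ^ 2 * Real.cos φ ^ 2) • Maa)
        = (π * (c θ * Real.sin θ ^ 2)) • Maa := by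
      rw [intervalIntegral.integral_smul_const]
      congr 1
      rw [intervalIntegral.integral_const_mul, integral_cos_sq]
      simp [Real.sin_two_pi, Real.cos_two_pi]
      ring
    have e2 : (∫ φ in (0:ℝ)..(2*π), (c θ * Real.sin θ ^ 2 * Real.sin φ ^ 2) • Mbb)
        = (π * (c θ * Real.sin θ ^ 2)) • Mbb := by
      rw [intervalIntegral.integral_smul_const]
      congr 1
      rw [intervalIntegral.integral_const_mul, integral_sin_sq]
      simp [Real.sin_two_pi, Real.cos_two_pi]
      ring
    have e3 : (∫ φ in (0:ℝ)..(2*π), (c θ * Real.sin θ ^ 2 * (Real.sin φ * Real.cos φ)) • Mab)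
        = (0:ℝ) • Mab := by
      rw [intervalIntegral.integral_smul_const]
      congr 1
      rw [intervalIntegral.integral_const_mul, integral_sin_mul_cos₁]
      simp [Real.sin_two_pi]
    have e4 : (∫ φ in (0:ℝ)..(2*π), (c θ * (Real.sin θ * Real.cos θ) * Real.cos φ) • MaO)
        = (0:ℝ) • MaO := by
      rw [intervalIntegral.integral_smul_const]
      congr 1
      rw [intervalIntegral.integral_const_mul, integral_cos]
      simp [Real.sin_two_pi]
    have e5 : (∫ φ in (0:ℝ)..(2*π), (c θ * (Real.sin θ * Real.cos θ) * Real.sin φ) • MbO)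
        = (0:ℝ) • MbO := by
      rw [intervalIntegral.integral_smul_const]
      congr 1
      rw [intervalIntegral.integral_const_mul, integral_sin]
      simp [Real.cos_two_pi]
    have e6 : (∫ φ in (0:ℝ)..(2*π), (c θ * Real.cos θ ^ 2) • T)
        = (2 * π * (c θ * Real.cos θ ^ 2)) • T := by
      rw [intervalIntegral.integral_const, smul_smul]
      congr 1
      ring
    rw [e1, e2, e3, e4, e5, e6, zero_smul, zero_smul, zero_smul,
      add_zero, add_zero, add_zero, ← smul_add]
    have hab : Maa + Mbb = S := by
      funext i j
      simp [hMaa, hMbb, hS]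
    rw [hab]
  rw [show (fun θ => ∫ φ in (0:ℝ)..(2 * π),
      (c θ) • (fun i j => ωpar Ω e₁ e₂ θ φ i * ωpar Ω e₁ e₂ θ φ j : Fin 3 → Fin 3 → ℝ))
      = fun θ => (π * (c θ * Real.sin θ ^ 2)) • S + (2 * π * (c θ * Real.cos θ ^ 2)) • T
      from funext inner]
  have J1 : IntervalIntegrable (fun θ => (π * (c θ * Real.sin θ ^ 2)) • S)
      MeasureTheory.volume 0 π :=
    ((continuous_const.mul (hccont.mul (Real.continuous_sin.pow 2))).smul
      continuous_const).intervalIntegrable _ _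
  have J2 : IntervalIntegrable (fun θ => (2 * π * (c θ * Real.cos θ ^ 2)) • T)
      MeasureTheory.volume 0 π :=
    ((continuous_const.mul (hccont.mul (Real.continuous_cos.pow 2))).smul
      continuous_const).intervalIntegrable _ _
  rw [intervalIntegral.integral_add J1 J2, intervalIntegral.integral_smul_const,
    intervalIntegral.integral_smul_const, intervalIntegral.integral_const_mul,
    intervalIntegral.integral_const_mul]

/-- `P_{Ω⊥} (∫_{S²} ω⊗ω h(ω·Ω) M_Ω(ω) dω) P_{Ω⊥} = C₀ P_{Ω⊥}`, with the
normalized sphere measure `∫_{S²} dω = 1` (i.e. `(1/(4π)) sinθ dθ dφ`). -/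
theorem stmt8 (κ : ℝ) (hκ : 0 < κ) (h : ℝ → ℝ) (hh : Continuous h)
    (Ω e₁ e₂ : Fin 3 → ℝ)
    (h1 : ∑ i, e₁ i * e₁ i = 1) (h2 : ∑ i, e₂ i * e₂ i = 1) (hΩ : ∑ i, Ω i * Ω i = 1)
    (h12 : ∑ i, e₁ i * e₂ i = 0) (h1Ω : ∑ i, e₁ i * Ω i = 0) (h2Ω : ∑ i, e₂ i * Ω i = 0) :
    mm (projMat Ω) (mm
      ((4 * π)⁻¹ • (∫ θ in (0:ℝ)..π, ∫ φ in (0:ℝ)..(2 * π),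
        (Real.sin θ * h (Real.cos θ) * (Real.exp (κ * Real.cos θ) / Znorm κ)) •
          (fun i j => ωpar Ω e₁ e₂ θ φ i * ωpar Ω e₁ e₂ θ φ j : Fin 3 → Fin 3 → ℝ)))
      (projMat Ω))
    = Czero h κ • projMat Ω := by
  rw [Fin.sum_univ_three] at h1 h2 hΩ h12 h1Ω h2Ω
  have hccont : Continuous
      (fun θ => Real.sin θ * h (Real.cos θ) * (Real.exp (κ * Real.cos θ) / Znorm κ)) :=
    (Real.continuous_sin.mul (hh.comp Real.continuous_cos)).mul
      ((Real.continuous_exp.comp (continuous_const.mul Real.continuous_cos)).div_const _)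
  set S : Fin 3 → Fin 3 → ℝ := fun i j => e₁ i * e₁ j + e₂ i * e₂ j with hS
  set T : Fin 3 → Fin 3 → ℝ := fun i j => Ω i * Ω j with hT
  have outer : (∫ θ in (0:ℝ)..π, ∫ φ in (0:ℝ)..(2 * π),
      (Real.sin θ * h (Real.cos θ) * (Real.exp (κ * Real.cos θ) / Znorm κ)) •
        (fun i j => ωpar Ω e₁ e₂ θ φ i * ωpar Ω e₁ e₂ θ φ j : Fin 3 → Fin 3 → ℝ))
      = (π * ∫ θ in (0:ℝ)..π,
          (Real.sin θ * h (Real.cos θ) * (Real.exp (κ * Real.cos θ) / Znorm κ)) *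
            Real.sin θ ^ 2) • S
        + (2 * π * ∫ θ in (0:ℝ)..π,
          (Real.sin θ * h (Real.cos θ) * (Real.exp (κ * Real.cos θ) / Znorm κ)) *
            Real.cos θ ^ 2) • T :=
    aux_integral _ hccont Ω e₁ e₂
  rw [outer]
  set K1 : ℝ := π * ∫ θ in (0:ℝ)..π,
      (Real.sin θ * h (Real.cos θ) * (Real.exp (κ * Real.cos θ) / Znorm κ)) *
        Real.sin θ ^ 2 with hK1
  set K2 : ℝ := 2 * π * ∫ θ in (0:ℝ)..π,
      (Real.sin θ * h (Real.cos θ) * (Real.exp (κ * Real.cos θ) / Znorm κ)) *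
        Real.cos θ ^ 2 with hK2
  -- completeness of the orthonormal frame
  have comp : ∀ i j, e₁ i * e₁ j + e₂ i * e₂ j + Ω i * Ω j = if i = j then (1:ℝ) else 0 := by
    let M : Matrix (Fin 3) (Fin 3) ℝ := Matrix.of fun i j => ![e₁ j, e₂ j, Ω j] i
    have hM : M * Mᵀ = 1 := by
      ext i j
      fin_cases i <;> fin_cases j <;>
        simp [M, Matrix.mul_apply, Matrix.transpose_apply, Fin.sum_univ_three,
          Matrix.one_apply] <;>
        first
          | linear_combination h1 | linear_combination h2 | linear_combination hΩ
          | linear_combination h12 | linear_combination h1Ω | linear_combination h2Ω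
    have hM' : Mᵀ * M = 1 := mul_eq_one_comm.mp hM
    intro i j
    have hij := Matrix.ext_iff.mpr hM' i j
    simpa [M, Matrix.mul_apply, Matrix.transpose_apply, Fin.sum_univ_three,
      Matrix.one_apply] using hij
  -- matrix algebra facts
  have hSP : mm S (projMat Ω) = S := by
    funext i j
    show (∑ k, S i k * projMat Ω k j) = S i j
    have hterm : ∀ k, S i k * projMat Ω k j
        = (if k = j then S i k else 0) - S i k * (Ω k * Ω j) := by
      intro k
      simp only [projMat]
      split <;> ring
    rw [Finset.sum_congr rfl fun k _ => hterm k, Finset.sum_sub_distrib,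
      Finset.sum_ite_eq' Finset.univ j (fun k => S i k)]
    simp only [Finset.mem_univ, if_true, Fin.sum_univ_three, hS]
    linear_combination (-(e₁ i) * Ω j) * h1Ω + (-(e₂ i) * Ω j) * h2Ω
  have hTP : mm T (projMat Ω) = (fun _ _ => (0:ℝ)) := by
    funext i j
    show (∑ k, T i k * projMat Ω k j) = 0
    have hterm : ∀ k, T i k * projMat Ω k j
        = (if k = j then T i k else 0) - T i k * (Ω k * Ω j) := by
      intro k
      simp only [projMat]
      split <;> ring
    rw [Finset.sum_congr rfl fun k _ => hterm k, Finset.sum_sub_distrib,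
      Finset.sum_ite_eq' Finset.univ j (fun k => T i k)]
    simp only [Finset.mem_univ, if_true, Fin.sum_univ_three, hT]
    linear_combination (-(Ω i * Ω j)) * hΩ
  have hPS : mm (projMat Ω) S = S := by
    funext i j
    show (∑ k, projMat Ω i k * S k j) = S i j
    have hterm : ∀ k, projMat Ω i k * S k j
        = (if i = k then S k j else 0) - Ω i * Ω k * S k j := by
      intro k
      simp only [projMat]
      split <;> ring
    rw [Finset.sum_congr rfl fun k _ => hterm k, Finset.sum_sub_distrib,
      Finset.sum_ite_eq Finset.univ i (fun k => S k j)]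
    simp only [Finset.mem_univ, if_true, Fin.sum_univ_three, hS]
    linear_combination (-(e₁ j) * Ω i) * h1Ω + (-(e₂ j) * Ω i) * h2Ω
  -- distribute mm over the linear combination
  have step1 : mm ((4 * π)⁻¹ • (K1 • S + K2 • T)) (projMat Ω)
      = ((4 * π)⁻¹ * K1) • S := by
    funext i j
    show (∑ k, ((4 * π)⁻¹ • (K1 • S + K2 • T)) i k * projMat Ω k j) = _
    have : ∀ k, ((4 * π)⁻¹ • (K1 • S + K2 • T)) i k * projMat Ω k j
        = ((4 * π)⁻¹ * K1) * (S i k * projMat Ω k j)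
          + ((4 * π)⁻¹ * K2) * (T i k * projMat Ω k j) := by
      intro k
      simp only [Pi.smul_apply, Pi.add_apply, smul_eq_mul]
      ring
    rw [Finset.sum_congr rfl fun k _ => this k, Finset.sum_add_distrib,
      ← Finset.mul_sum, ← Finset.mul_sum]
    have h1' : (∑ k, S i k * projMat Ω k j) = S i j := congrFun (congrFun hSP i) j
    have h2' : (∑ k, T i k * projMat Ω k j) = 0 := congrFun (congrFun hTP i) j
    rw [h1', h2']
    simp
  rw [step1]
  have step2 : mm (projMat Ω) (((4 * π)⁻¹ * K1) • S) = ((4 * π)⁻¹ * K1) • S := by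
    funext i j
    show (∑ k, projMat Ω i k * (((4 * π)⁻¹ * K1) • S) k j) = _
    have : ∀ k, projMat Ω i k * (((4 * π)⁻¹ * K1) • S) k j
        = ((4 * π)⁻¹ * K1) * (projMat Ω i k * S k j) := by
      intro k
      simp only [Pi.smul_apply, smul_eq_mul]
      ring
    have hps : (∑ k, projMat Ω i k * S k j) = S i j := congrFun (congrFun hPS i) j
    rw [Finset.sum_congr rfl fun k _ => this k, ← Finset.mul_sum, hps]
    simp [smul_eq_mul]
  rw [step2]
  -- identify the scalar and the matrix
  have hSP' : S = projMat Ω := by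
    funext i j
    simp only [hS, projMat]
    linear_combination comp i j
  have hcoef : (4 * π)⁻¹ * K1 = Czero h κ := by
    rw [hK1]
    simp only [Czero]
    have hint : (∫ θ in (0:ℝ)..π,
        (Real.sin θ * h (Real.cos θ) * (Real.exp (κ * Real.cos θ) / Znorm κ)) *
          Real.sin θ ^ 2)
        = ∫ θ in (0:ℝ)..π,
          Real.sin θ ^ 3 * h (Real.cos θ) * (Real.exp (κ * Real.cos θ) / Znorm κ) := by
      apply intervalIntegral.integral_congr
      intro θ _
      ring
    rw [hint]
    have hπ : (π : ℝ) ≠ 0 := Real.pi_ne_zero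
    have hq : (4 * π)⁻¹ * π = 1/4 := by
      rw [mul_inv, mul_assoc, inv_mul_cancel₀ hπ, mul_one]
      norm_num
    rw [← mul_assoc, hq]
  rw [hcoef, hSP']
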